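/- (Completeness of Dom_w.) Let Ω = (a,b) be a bounded open interval, w : Ω → ℝ nonnegative and locally integrable, finitely degenerate with I = ⋃_{i=1}^N (a_i,b_i) (N < ∞) the union of the pairwise disjoint open intervals on which 1/w is locally essentially bounded; assume w has a representative that is locally absolutely continuous on each (a_i,b_i) with locally integrable derivative, and let ŵ be the auxiliary weight associated with w. Let Dom_w be the set of (a.e.-equivalence classes of) functions u that are locally absolutely continuous on each (a_i,b_i) and satisfy ‖u‖ := ∫_I |u| ŵ dx + ∫_I |u'| w dx < ∞. Then Dom_w is complete for this norm: every sequence (u_k) in Dom_w with ∫_I |u_k − u_l| ŵ dx + ∫_I |u_k' − u_l'| w dx → 0 as k,l → ∞ admits a limit u ∈ Dom_w with ∫_I |u_k − u| ŵ dx + ∫_I |u_k' − u'| w dx → 0. -/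

import Mathlib

open MeasureTheory Set Filter Topology
open scoped ENNReal

/-- The essential supremum of `1/w` over `E`, with respect to Lebesgue measure,
valued in `[0,+∞]`.  The convention `(+∞)⁻¹ = 0` is built into `ℝ≥0∞`. -/
noncomputable def essSupInv (w : ℝ → ℝ) (E : Set ℝ) : ℝ≥0∞ :=
  essSup (fun y => ENNReal.ofReal (1 / w y)) (MeasureTheory.volume.restrict E)

/-- `u` is absolutely continuous on `[c,d]` with a.e. derivative `u'`:
`u'` is integrable on `[c,d]` and `u` is the indefinite integral of `u'` there. -/
def ACOn (u u' : ℝ → ℝ) (c d : ℝ) : Prop :=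
  IntervalIntegrable u' MeasureTheory.volume c d ∧
    ∀ x ∈ Set.Icc c d, u x = u c + ∫ t in c..x, u' t

/-- `u` is locally absolutely continuous on `(α,β)` with a.e. derivative `u'`:
it is absolutely continuous on every compact subinterval. -/
def LocACOn (u u' : ℝ → ℝ) (α β : ℝ) : Prop :=
  ∀ c d : ℝ, α < c → c ≤ d → d < β → ACOn u u' c d

/-- The auxiliary weight `ŵ` associated with `w` on the interval `(α,β)`;
at the endpoints `α`, `β` this expression gives the one-sided limit values. -/
noncomputable def hatW (w : ℝ → ℝ) (α β : ℝ) (x : ℝ) : ℝ :=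
  if x ≤ (3*α+β)/4 then ((essSupInv w (Set.Ioo x ((α+β)/2)))⁻¹).toReal
  else if x ≤ (α+3*β)/4 then
    ((essSupInv w (Set.Ioo ((3*α+β)/4) ((α+3*β)/4)))⁻¹).toReal
  else ((essSupInv w (Set.Ioo ((α+β)/2) x))⁻¹).toReal

open Classical in
/-- The auxiliary weight associated with a family of pairwise disjoint open intervals
`(A i, B i)`, extended by `0` off the closure of their union (on each closed interval
`[A i, B i]` it is given by `hatW`, whose values at the endpoints are the one-sided
limit values). -/
noncomputable def hatWFam (w : ℝ → ℝ) {ι : Type*} (A B : ι → ℝ) (x : ℝ) : ℝ :=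
  if h : ∃ i, x ∈ Set.Icc (A i) (B i) then hatW w (A h.choose) (B h.choose) x else 0

/-!
On each interval `(α, β)` the continuous representative `wt` of `w` is either positive
everywhere or nonpositive everywhere: `1/w` is essentially bounded on compact subintervals, so
`w` avoids a gap `(0, δ)` almost everywhere there, hence `wt` avoids it everywhere, and the
intermediate value theorem does the rest. If `wt ≤ 0`, both weights vanish on `(α, β)` and the
norm is zero there. Otherwise `w` is bounded below on compact subintervals and `ŵ` on the middle
half, so a Cauchy sequence has derivatives converging in `L¹(w)` (completeness of `L¹`) and in
`L¹` on compacts, while the values at a base point form a Cauchy sequence because they are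
controlled by the local `L¹` norms of `u` and `u'`. The limit `v = L + ∫ v'` is locally absolutely
continuous, `u k → v` pointwise, and Fatou's lemma turns the Cauchy estimate into convergence of
`∫ |u k - v| ŵ`. The finitely many intervals are then glued together.
-/

open scoped Interval

namespace MeasureTheory

variable {α E : Type*} [MeasurableSpace α] {μ : Measure α} [NormedAddCommGroup E] {p : ℝ≥0∞}

theorem exists_tendsto_eLpNorm_sub_of_cauchy [CompleteSpace E] [Fact (1 ≤ p)]
    {f : ℕ → α → E} (hf : ∀ n, MemLp (f n) p μ)
    (hcau : Tendsto (fun n : ℕ × ℕ => eLpNorm (f n.1 - f n.2) p μ) atTop (𝓝 0)) :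
    ∃ g, MemLp g p μ ∧ Tendsto (fun n => eLpNorm (f n - g) p μ) atTop (𝓝 0) := by
  have hF : CauchySeq fun n => (hf n).toLp (f n) := by
    rw [cauchySeq_iff_tendsto_dist_atTop_0]
    refine ((ENNReal.tendsto_toReal ENNReal.zero_ne_top).comp hcau).congr fun n => ?_
    rw [dist_eq_norm, ← MemLp.toLp_sub, Lp.norm_toLp]
    rfl
  obtain ⟨G, hG⟩ := cauchySeq_tendsto_of_complete hF
  refine ⟨G, Lp.memLp G, ?_⟩
  rw [Lp.tendsto_Lp_iff_tendsto_eLpNorm'] at hG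
  refine hG.congr fun n => eLpNorm_congr_ae ?_
  filter_upwards [(hf n).coeFn_toLp] with x hx
  simp [hx]

theorem tendsto_eLpNorm_sub_of_cauchy_of_ae_tendsto {f : ℕ → α → E} {g : α → E}
    (hf : ∀ n, AEStronglyMeasurable (f n) μ)
    (hcau : Tendsto (fun n : ℕ × ℕ => eLpNorm (f n.1 - f n.2) p μ) atTop (𝓝 0))
    (hlim : ∀ᵐ x ∂μ, Tendsto (fun n => f n x) atTop (𝓝 (g x))) :
    Tendsto (fun n => eLpNorm (f n - g) p μ) atTop (𝓝 0) := by
  rw [ENNReal.tendsto_atTop_zero] at hcau ⊢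
  intro ε hε
  obtain ⟨⟨M, M'⟩, hM⟩ := hcau ε hε
  refine ⟨max M M', fun k hk => ?_⟩
  have hfatou : eLpNorm (f k - g) p μ ≤ liminf (fun l => eLpNorm (f k - f l) p μ) atTop :=
    Lp.eLpNorm_lim_le_liminf_eLpNorm (fun l => (hf k).sub (hf l)) _ <| by
      filter_upwards [hlim] with x hx using tendsto_const_nhds.sub hx
  refine hfatou.trans (liminf_le_of_frequently_le' (Eventually.frequently ?_))
  filter_upwards [eventually_ge_atTop M'] with l hl
  exact hM (k, l) ⟨le_of_max_le_left hk, hl⟩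

theorem lintegral_ofReal_abs_mul_eq_eLpNorm {q : α → ℝ} (hq : Measurable q) (f : α → ℝ) :
    ∫⁻ x, ENNReal.ofReal (|f x| * q x) ∂μ =
      eLpNorm f 1 (μ.withDensity fun x => ENNReal.ofReal (q x)) := by
  rw [eLpNorm_one_eq_lintegral_enorm, lintegral_withDensity_eq_lintegral_mul_non_measurable _
    hq.ennreal_ofReal (ae_of_all _ fun _ => ENNReal.ofReal_lt_top)]
  refine lintegral_congr fun x => ?_
  rw [Pi.mul_apply, ENNReal.ofReal_mul (abs_nonneg _), Real.enorm_eq_ofReal_abs, mul_comm]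

theorem lintegral_enorm_le_inv_mul {q : α → ℝ} {δ : ℝ} (hδ : 0 < δ) (hq : ∀ᵐ x ∂μ, δ ≤ q x)
    (f : α → ℝ) :
    ∫⁻ x, ‖f x‖ₑ ∂μ ≤ (ENNReal.ofReal δ)⁻¹ * ∫⁻ x, ENNReal.ofReal (|f x| * q x) ∂μ := by
  have hδ' : ENNReal.ofReal δ ≠ 0 := (ENNReal.ofReal_pos.2 hδ).ne'
  rw [← lintegral_const_mul' _ _ (ENNReal.inv_ne_top.2 hδ')]
  refine lintegral_mono_ae ?_
  filter_upwards [hq] with x hx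
  rw [← ENNReal.div_eq_inv_mul, ENNReal.le_div_iff_mul_le (.inl hδ') (.inl ENNReal.ofReal_ne_top),
    Real.enorm_eq_ofReal_abs, ← ENNReal.ofReal_mul (abs_nonneg _)]
  exact ENNReal.ofReal_le_ofReal (mul_le_mul_of_nonneg_left hx (abs_nonneg _))

end MeasureTheory

namespace intervalIntegral

theorem enorm_integral_le_lintegral_enorm_uIoc {f : ℝ → ℝ} (a b : ℝ) :
    ‖∫ t in a..b, f t‖ₑ ≤ ∫⁻ t in Ι a b, ‖f t‖ₑ := by
  rw [← ofReal_norm, norm_integral_eq_norm_integral_uIoc, ofReal_norm]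
  exact enorm_integral_le_lintegral_enorm _

theorem tendsto_integral_of_tendsto_lintegral_enorm {f : ℕ → ℝ → ℝ} {g : ℝ → ℝ} {a b : ℝ}
    (hf : ∀ n, IntervalIntegrable (f n) volume a b) (hg : IntervalIntegrable g volume a b)
    (hlim : Tendsto (fun n => ∫⁻ t in Ι a b, ‖f n t - g t‖ₑ) atTop (𝓝 0)) :
    Tendsto (fun n => ∫ t in a..b, f n t) atTop (𝓝 (∫ t in a..b, g t)) := by
  rw [tendsto_iff_edist_tendsto_0]
  refine tendsto_of_tendsto_of_tendsto_of_le_of_le tendsto_const_nhds hlim (fun _ => zero_le)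
    fun n => ?_
  rw [edist_eq_enorm_sub, ← integral_sub (hf n) hg]
  exact enorm_integral_le_lintegral_enorm_uIoc a b

end intervalIntegral

theorem aestronglyMeasurable_of_integrableOn_Icc {f : ℝ → ℝ} {α β : ℝ}
    (hf : ∀ c d, α < c → d < β → IntegrableOn f (Icc c d)) :
    AEStronglyMeasurable f (volume.restrict (Ioo α β)) := by
  refine LocallyIntegrableOn.aestronglyMeasurable <|
    (locallyIntegrableOn_iff isOpen_Ioo.isLocallyClosed).2 fun k hk hkc => ?_
  rcases k.eq_empty_or_nonempty with rfl | hne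
  · simp
  exact (hf _ _ (hk (hkc.sInf_mem hne)).1 (hk (hkc.sSup_mem hne)).2).mono_set
    hkc.isBounded.subset_Icc_sInf_sSup

section AbsolutelyContinuous

variable {u u' v v' : ℝ → ℝ} {c d α β : ℝ}

theorem ACOn.sub (hu : ACOn u u' c d) (hv : ACOn v v' c d) : ACOn (u - v) (u' - v') c d := by
  refine ⟨hu.1.sub hv.1, fun x hx => ?_⟩
  have hsub : IntervalIntegrable u' volume c x ∧ IntervalIntegrable v' volume c x := by
    have hx' : uIcc c x ⊆ uIcc c d := uIcc_subset_uIcc_left (Icc_subset_uIcc hx)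
    exact ⟨hu.1.mono_set hx', hv.1.mono_set hx'⟩
  simp only [Pi.sub_apply]
  rw [hu.2 x hx, hv.2 x hx, intervalIntegral.integral_sub hsub.1 hsub.2]
  ring

theorem ACOn.continuousOn (hcd : c ≤ d) (h : ACOn u u' c d) : ContinuousOn u (Icc c d) := by
  have hprim := intervalIntegral.continuousOn_primitive_interval
    ((intervalIntegrable_iff_integrableOn_Icc_of_le hcd).1 h.1 |>.mono_set
      (uIcc_of_le hcd).subset)
  rw [uIcc_of_le hcd] at hprim
  exact (continuousOn_const.add hprim).congr fun x hx => h.2 x hx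

theorem ACOn.eq_add_integral (h : ACOn u u' c d) {x y : ℝ} (hx : x ∈ Icc c d)
    (hy : y ∈ Icc c d) : u y = u x + ∫ t in x..y, u' t := by
  have hint : ∀ z ∈ Icc c d, IntervalIntegrable u' volume c z := fun z hz =>
    h.1.mono_set (uIcc_subset_uIcc_left (Icc_subset_uIcc hz))
  rw [h.2 x hx, h.2 y hy, ← intervalIntegral.integral_interval_sub_left (hint y hy) (hint x hx)]
  ring

/-- The embedding `W^{1,1} ⊂ C` on a compact interval, in quantitative form. -/
theorem ACOn.enorm_le (h : ACOn u u' c d) (hcd : c < d) {p : ℝ} (hp : p ∈ Icc c d) :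
    ‖u p‖ₑ ≤ (ENNReal.ofReal (d - c))⁻¹ * (∫⁻ x in Icc c d, ‖u x‖ₑ) +
      ∫⁻ x in Icc c d, ‖u' x‖ₑ := by
  set C := ∫⁻ x in Icc c d, ‖u' x‖ₑ
  have hL0 : ENNReal.ofReal (d - c) ≠ 0 := (ENNReal.ofReal_pos.2 (sub_pos.2 hcd)).ne'
  have hpt : ∀ x ∈ Icc c d, ‖u p‖ₑ ≤ ‖u x‖ₑ + C := fun x hx => by
    rw [h.eq_add_integral hx hp]
    refine (enorm_add_le _ _).trans ?_
    gcongr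
    exact (intervalIntegral.enorm_integral_le_lintegral_enorm_uIoc x p).trans <|
      lintegral_mono_set <| uIoc_subset_uIcc.trans (uIcc_subset_Icc hx hp)
  have hint : ‖u p‖ₑ * ENNReal.ofReal (d - c) ≤
      (∫⁻ x in Icc c d, ‖u x‖ₑ) + C * ENNReal.ofReal (d - c) := by
    rw [← Real.volume_Icc, ← setLIntegral_const, ← setLIntegral_const,
      ← lintegral_add_right _ measurable_const]
    exact setLIntegral_mono' measurableSet_Icc hpt
  rw [← ENNReal.le_div_iff_mul_le (.inl hL0) (.inl ENNReal.ofReal_ne_top), ENNReal.add_div,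
    ENNReal.mul_div_cancel_right hL0 ENNReal.ofReal_ne_top, ENNReal.div_eq_inv_mul] at hint
  exact hint

theorem LocACOn.continuousOn (h : LocACOn u u' α β) : ContinuousOn u (Ioo α β) := by
  intro x hx
  obtain ⟨c, hc, hcx⟩ := exists_between hx.1
  obtain ⟨d, hxd, hd⟩ := exists_between hx.2
  have hcd : c ≤ d := (hcx.trans hxd).le
  exact ((h c d hc hcd hd).continuousOn hcd).continuousAt (Icc_mem_nhds hcx hxd)
    |>.continuousWithinAt

theorem LocACOn.integrableOn_Icc (h : LocACOn u u' α β) (hc : α < c) (hd : d < β) :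
    IntegrableOn u' (Icc c d) := by
  rcases le_or_gt c d with hcd | hcd
  · exact (intervalIntegrable_iff_integrableOn_Icc_of_le hcd).1 (h c d hc hcd hd).1
  · simp [Icc_eq_empty_of_lt hcd]

theorem LocACOn.eq_add_integral (h : LocACOn u u' α β) {x y : ℝ} (hx : x ∈ Ioo α β)
    (hy : y ∈ Ioo α β) : u y = u x + ∫ t in x..y, u' t :=
  (h _ _ (lt_min hx.1 hy.1) min_le_max (max_lt hx.2 hy.2)).eq_add_integral
    ⟨min_le_left x y, le_max_left x y⟩ ⟨min_le_right x y, le_max_right x y⟩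

theorem LocACOn.congr (h : LocACOn u u' α β) (hv : EqOn u v (Ioo α β))
    (hv' : EqOn u' v' (Ioo α β)) : LocACOn v v' α β := by
  intro c d hc hcd hd
  have hsub : Icc c d ⊆ Ioo α β := Icc_subset_Ioo hc hd
  obtain ⟨hint, hrep⟩ := h c d hc hcd hd
  refine ⟨hint.congr (hv'.mono (uIoc_subset_uIcc.trans (uIcc_of_le hcd ▸ hsub))),
    fun x hx => ?_⟩
  rw [← hv (hsub hx), ← hv (hsub ⟨le_rfl, hcd⟩), hrep x hx]
  exact congrArg _ (intervalIntegral.integral_congr <| hv'.mono <|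
    (uIcc_subset_Icc ⟨le_rfl, hcd⟩ hx).trans hsub)

theorem locACOn_primitive {f : ℝ → ℝ}
    (hf : ∀ x ∈ Ioo α β, ∀ y ∈ Ioo α β, IntervalIntegrable f volume x y)
    {p : ℝ} (hp : p ∈ Ioo α β) (L : ℝ) :
    LocACOn (fun x => L + ∫ t in p..x, f t) f α β := by
  intro c d hc hcd hd
  have hsub : Icc c d ⊆ Ioo α β := Icc_subset_Ioo hc hd
  have hcI : c ∈ Ioo α β := hsub ⟨le_rfl, hcd⟩
  refine ⟨hf c hcI d (hsub ⟨hcd, le_rfl⟩), fun x hx => ?_⟩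
  rw [add_assoc, intervalIntegral.integral_add_adjacent_intervals (hf p hp c hcI)
    (hf c hcI x (hsub hx))]

end AbsolutelyContinuous

theorem cauchySeq_apply_of_tendsto_lintegral {u u' : ℕ → ℝ → ℝ} {c d p : ℝ}
    (hAC : ∀ k, ACOn (u k) (u' k) c d) (hcd : c < d) (hp : p ∈ Icc c d)
    (hu : Tendsto (fun n : ℕ × ℕ => ∫⁻ x in Icc c d, ‖u n.1 x - u n.2 x‖ₑ) atTop (𝓝 0))
    (hu' : Tendsto (fun n : ℕ × ℕ => ∫⁻ x in Icc c d, ‖u' n.1 x - u' n.2 x‖ₑ) atTop (𝓝 0)) :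
    CauchySeq fun k => u k p := by
  have hbound := (ENNReal.Tendsto.const_mul hu
    (.inr (ENNReal.inv_ne_top.2 (ENNReal.ofReal_pos.2 (sub_pos.2 hcd)).ne'))).add hu'
  rw [mul_zero, add_zero] at hbound
  have hedist : Tendsto (fun n : ℕ × ℕ => edist (u n.1 p) (u n.2 p)) atTop (𝓝 0) :=
    tendsto_of_tendsto_of_tendsto_of_le_of_le tendsto_const_nhds hbound (fun _ => zero_le)
      fun n => by
        rw [edist_eq_enorm_sub]
        exact ((hAC n.1).sub (hAC n.2)).enorm_le hcd hp
  rw [cauchySeq_iff_tendsto_dist_atTop_0]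
  exact ((ENNReal.tendsto_toReal ENNReal.zero_ne_top).comp hedist).congr fun n =>
    (dist_edist _ _).symm

theorem ContinuousOn.forall_mem_of_ae_mem {X Y : Type*} [TopologicalSpace X] [MeasurableSpace X]
    [OpensMeasurableSpace X] [TopologicalSpace Y] (μ : Measure X) [μ.IsOpenPosMeasure]
    {f : X → Y} {U : Set X} {C : Set Y} (hf : ContinuousOn f U) (hU : IsOpen U)
    (hC : IsClosed C) (h : ∀ᵐ x ∂μ.restrict U, f x ∈ C) : ∀ x ∈ U, f x ∈ C := by
  have hnull : μ (U ∩ f ⁻¹' Cᶜ) = 0 := by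
    rw [ae_restrict_iff' hU.measurableSet, ae_iff] at h
    simpa only [Classical.not_imp, inter_def, mem_preimage, mem_compl_iff] using h
  intro x hx
  by_contra hfx
  rw [(hf.isOpen_inter_preimage hU hC.isOpen_compl).measure_eq_zero_iff μ] at hnull
  exact hnull.subset ⟨hx, hfx⟩

theorem IsPreconnected.le_of_forall_le_or_le {X : Type*} [TopologicalSpace X] {U : Set X}
    {f : X → ℝ} {a b : ℝ} (hab : a < b) (hU : IsPreconnected U) (hf : ContinuousOn f U)
    (hgap : ∀ x ∈ U, f x ≤ a ∨ b ≤ f x) {x₀ : X} (hx₀ : x₀ ∈ U) (ha : a < f x₀) :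
    ∀ x ∈ U, b ≤ f x := by
  intro x hx
  refine (hgap x hx).resolve_left fun hxa => ?_
  have hmin : a < min b (f x₀) := lt_min hab ha
  obtain ⟨z, hz, hfz⟩ := hU.intermediate_value hx hx₀ hf
    (⟨by linarith, (by linarith [min_le_right b (f x₀)])⟩ :
      (a + min b (f x₀)) / 2 ∈ Icc (f x) (f x₀))
  rcases hgap z hz with h | h <;> linarith [min_le_left b (f x₀)]

theorem exists_pos_ae_le_of_continuousOn {w wt : ℝ → ℝ} {K : Set ℝ} (hK : IsCompact K)
    (hcont : ContinuousOn wt K) (hpos : ∀ x ∈ K, 0 < wt x)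
    (hwt : ∀ᵐ x ∂volume.restrict K, wt x = w x) :
    ∃ δ > 0, ∀ᵐ x ∂volume.restrict K, δ ≤ w x := by
  rcases K.eq_empty_or_nonempty with rfl | hne
  · exact ⟨1, one_pos, by simp⟩
  obtain ⟨x₀, hx₀, hmin⟩ := hK.exists_isMinOn hne hcont
  refine ⟨wt x₀, hpos x₀ hx₀, ?_⟩
  filter_upwards [hwt, ae_restrict_mem hK.measurableSet] with x h1 h2
  exact h1 ▸ hmin h2

section Weight

variable {w : ℝ → ℝ} {α β : ℝ}

theorem essSupInv_mono (w : ℝ → ℝ) {E F : Set ℝ} (h : E ⊆ F) :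
    essSupInv w E ≤ essSupInv w F :=
  essSup_mono_measure' (Measure.restrict_mono h le_rfl)

theorem essSupInv_eq_zero_of_ae_nonpos {E : Set ℝ} (h : ∀ᵐ x ∂volume.restrict E, w x ≤ 0) :
    essSupInv w E = 0 := by
  refine ENNReal.essSup_eq_zero_iff.2 ?_
  filter_upwards [h] with x hx
  exact ENNReal.ofReal_eq_zero.2 (one_div_nonpos.2 hx)

theorem essSupInv_pos {E : Set ℝ} (h : ∀ᵐ x ∂volume.restrict E, 0 < w x) (hE : volume E ≠ 0) :
    0 < essSupInv w E := by
  refine pos_iff_ne_zero.2 fun h0 => hE ?_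
  have hfalse : ∀ᵐ x ∂volume.restrict E, False := by
    filter_upwards [h, ENNReal.essSup_eq_zero_iff.1 h0] with x hpos hx
    exact (one_div_pos.2 hpos).not_ge (ENNReal.ofReal_eq_zero.1 hx)
  rwa [eventually_false_iff_eq_bot, ae_eq_bot, Measure.restrict_eq_zero] at hfalse

theorem exists_pos_ae_nonpos_or_le {E : Set ℝ} (hE : essSupInv w E < ⊤) :
    ∃ δ > 0, ∀ᵐ x ∂volume.restrict E, w x ≤ 0 ∨ δ ≤ w x := by
  set T := (essSupInv w E).toReal
  refine ⟨(T + 1)⁻¹, by positivity, ?_⟩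
  filter_upwards [ae_le_essSup (f := fun y => ENNReal.ofReal (1 / w y))] with x hx
  refine (le_or_gt (w x) 0).imp id fun hpos => inv_le_of_inv_le₀ hpos ?_
  have : 1 / w x ≤ T := (ENNReal.ofReal_le_iff_le_toReal hE.ne).1 hx
  rw [one_div] at this
  linarith

theorem LocACOn.forall_pos_of_pos {wt wd : ℝ → ℝ}
    (hwinv : ∀ c d : ℝ, α < c → c ≤ d → d < β → essSupInv w (Icc c d) < ⊤)
    (hwt : ∀ᵐ x ∂volume.restrict (Ioo α β), wt x = w x) (hwAC : LocACOn wt wd α β)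
    {x₀ : ℝ} (hx₀ : x₀ ∈ Ioo α β) (h₀ : 0 < wt x₀) : ∀ x ∈ Ioo α β, 0 < wt x := by
  intro x hx
  obtain ⟨c, hc, hcx⟩ := exists_between (lt_min hx.1 hx₀.1)
  obtain ⟨d, hxd, hd⟩ := exists_between (max_lt hx.2 hx₀.2)
  have hmem : ∀ y, y = x ∨ y = x₀ → y ∈ Ioo c d := by
    rintro y (rfl | rfl)
    · exact ⟨hcx.trans_le (min_le_left _ _), (le_max_left _ _).trans_lt hxd⟩
    · exact ⟨hcx.trans_le (min_le_right _ _), (le_max_right _ _).trans_lt hxd⟩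
  have hsub : Ioo c d ⊆ Ioo α β := Ioo_subset_Ioo hc.le hd.le
  obtain ⟨δ, hδ, hgap⟩ := exists_pos_ae_nonpos_or_le
    (hwinv c d hc (hcx.trans_le (min_le_max.trans hxd.le)).le hd)
  have hcont : ContinuousOn wt (Ioo c d) := hwAC.continuousOn.mono hsub
  have hgap' : ∀ y ∈ Ioo c d, wt y ∈ Iic 0 ∪ Ici δ := by
    refine hcont.forall_mem_of_ae_mem volume isOpen_Ioo (isClosed_Iic.union isClosed_Ici) ?_
    filter_upwards [ae_restrict_of_ae_restrict_of_subset hsub hwt,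
      ae_restrict_of_ae_restrict_of_subset Ioo_subset_Icc_self hgap] with y h1 h2
    rwa [h1]
  exact hδ.trans_le <| isPreconnected_Ioo.le_of_forall_le_or_le hδ hcont hgap'
    (hmem x₀ (.inr rfl)) h₀ x (hmem x (.inl rfl))

end Weight

section HatW

variable {w : ℝ → ℝ} {α β : ℝ}

theorem hatW_measurable (w : ℝ → ℝ) (α β : ℝ) : Measurable (hatW w α β) := by
  have hleft : Antitone fun x => essSupInv w (Ioo x ((α + β) / 2)) :=
    fun _ _ hxy => essSupInv_mono w (Ioo_subset_Ioo_left hxy)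
  have hright : Monotone fun x => essSupInv w (Ioo ((α + β) / 2) x) :=
    fun _ _ hxy => essSupInv_mono w (Ioo_subset_Ioo_right hxy)
  exact (ENNReal.measurable_toReal.comp hleft.measurable.inv).ite measurableSet_Iic <|
    measurable_const.ite measurableSet_Iic (ENNReal.measurable_toReal.comp hright.measurable.inv)

/-- Every `essSupInv` involved vanishes, and `hatW` then takes the value `(0⁻¹).toReal = 0`. -/
theorem hatW_eq_zero_of_ae_nonpos (hw : ∀ᵐ x ∂volume.restrict (Ioo α β), w x ≤ 0) {x : ℝ}
    (hx : x ∈ Ioo α β) : hatW w α β x = 0 := by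
  have hαβ : α < β := hx.1.trans hx.2
  have hzero : ∀ s t, α ≤ s → t ≤ β → essSupInv w (Ioo s t) = 0 := fun s t hs ht =>
    essSupInv_eq_zero_of_ae_nonpos (ae_restrict_of_ae_restrict_of_subset (Ioo_subset_Ioo hs ht) hw)
  unfold hatW
  split_ifs
  · rw [hzero _ _ hx.1.le (by linarith)]; simp
  · rw [hzero _ _ (by linarith) (by linarith)]; simp
  · rw [hzero _ _ (by linarith) hx.2.le]; simp

theorem hatW_eq_of_mem_Ioc {x : ℝ} (hx : x ∈ Ioc ((3 * α + β) / 4) ((α + 3 * β) / 4)) :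
    hatW w α β x = ((essSupInv w (Ioo ((3 * α + β) / 4) ((α + 3 * β) / 4)))⁻¹).toReal := by
  rw [hatW, if_neg (not_le.2 hx.1), if_pos hx.2]

theorem exists_pos_le_hatW (hαβ : α < β)
    (hwinv : ∀ c d : ℝ, α < c → c ≤ d → d < β → essSupInv w (Icc c d) < ⊤)
    (hw_pos : ∀ᵐ x ∂volume.restrict (Ioo α β), 0 < w x) :
    ∃ ρ > 0, ∀ x ∈ Icc ((α + β) / 2) ((α + 3 * β) / 4), ρ ≤ hatW w α β x := by
  set E := Ioo ((3 * α + β) / 4) ((α + 3 * β) / 4)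
  have hE_pos : 0 < essSupInv w E := essSupInv_pos
    (ae_restrict_of_ae_restrict_of_subset (Ioo_subset_Ioo (by linarith) (by linarith)) hw_pos)
    (by rw [Real.volume_Ioo]; exact (ENNReal.ofReal_pos.2 (by linarith)).ne')
  have hE_fin : essSupInv w E < ⊤ := (essSupInv_mono w Ioo_subset_Icc_self).trans_lt
    (hwinv _ _ (by linarith) (by linarith) (by linarith))
  exact ⟨_, ENNReal.toReal_pos (ENNReal.inv_ne_zero.2 hE_fin.ne) (ENNReal.inv_ne_top.2 hE_pos.ne'),
    fun x hx => (hatW_eq_of_mem_Ioc ⟨by linarith [hx.1], hx.2⟩).ge⟩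

end HatW

theorem hatWFam_eq_hatW {ι : Type*} {w : ℝ → ℝ} {A B : ι → ℝ} (hAB : ∀ i, A i < B i)
    (hdisj : Pairwise fun i j => Disjoint (Ioo (A i) (B i)) (Ioo (A j) (B j))) {i : ι} {x : ℝ}
    (hx : x ∈ Ioo (A i) (B i)) : hatWFam w A B x = hatW w (A i) (B i) x := by
  have hex : ∃ j, x ∈ Icc (A j) (B j) := ⟨i, Ioo_subset_Icc_self hx⟩
  suffices hex.choose = i by rw [hatWFam, dif_pos hex, this]
  by_contra hne
  have hdisj' := (hdisj hne).closure_left isOpen_Ioo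
  rw [closure_Ioo (hAB _).ne] at hdisj'
  exact disjoint_left.1 hdisj' hex.choose_spec hx

noncomputable def weightedVolume (s : Set ℝ) (q : ℝ → ℝ) : Measure ℝ :=
  (volume.restrict s).withDensity fun x => ENNReal.ofReal (q x)

section WeightedVolume

variable {s t : Set ℝ} {q : ℝ → ℝ}

theorem weightedVolume_ac : weightedVolume s q ≪ volume.restrict s :=
  withDensity_absolutelyContinuous _ _

theorem ac_weightedVolume (hq : Measurable q) (hpos : ∀ᵐ x ∂volume.restrict s, 0 < q x) :
    volume.restrict s ≪ weightedVolume s q :=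
  withDensity_absolutelyContinuous' hq.ennreal_ofReal.aemeasurable <| by
    filter_upwards [hpos] with x hx using (ENNReal.ofReal_pos.2 hx).ne'

theorem setLIntegral_ofReal_abs_mul (hq : Measurable q) (f : ℝ → ℝ) :
    ∫⁻ x in s, ENNReal.ofReal (|f x| * q x) = eLpNorm f 1 (weightedVolume s q) :=
  lintegral_ofReal_abs_mul_eq_eLpNorm hq f

theorem tendsto_setLIntegral_enorm_of_tendsto_eLpNorm {ι : Type*} {l : Filter ι}
    {F : ι → ℝ → ℝ} {δ : ℝ} (ht : t ⊆ s) (hq : Measurable q) (hδ : 0 < δ)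
    (hle : ∀ᵐ x ∂volume.restrict t, δ ≤ q x)
    (hF : Tendsto (fun n => eLpNorm (F n) 1 (weightedVolume s q)) l (𝓝 0)) :
    Tendsto (fun n => ∫⁻ x in t, ‖F n x‖ₑ) l (𝓝 0) := by
  have hbound := ENNReal.Tendsto.const_mul hF
    (.inr (ENNReal.inv_ne_top.2 (ENNReal.ofReal_pos.2 hδ).ne'))
  rw [mul_zero] at hbound
  refine tendsto_of_tendsto_of_tendsto_of_le_of_le tendsto_const_nhds hbound (fun _ => zero_le)
    fun n => (lintegral_enorm_le_inv_mul hδ hle (F n)).trans ?_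
  rw [← setLIntegral_ofReal_abs_mul hq]
  gcongr

end WeightedVolume

theorem exists_tendsto_eLpNorm_deriv {α β : ℝ} {w : ℝ → ℝ} (hwmeas : Measurable w)
    (hw_pos : ∀ᵐ x ∂volume.restrict (Ioo α β), 0 < w x)
    (hw_low : ∀ c d, α < c → c ≤ d → d < β →
      ∃ δ > 0, ∀ᵐ x ∂volume.restrict (Icc c d), δ ≤ w x)
    {d : ℕ → ℝ → ℝ} (hd_int : ∀ k c d', α < c → d' < β → IntegrableOn (d k) (Icc c d'))
    (hdfin : ∀ k, eLpNorm (d k) 1 (weightedVolume (Ioo α β) w) < ⊤)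
    (hd : Tendsto (fun n : ℕ × ℕ => eLpNorm (d n.1 - d n.2) 1 (weightedVolume (Ioo α β) w))
      atTop (𝓝 0)) :
    ∃ v', MemLp v' 1 (weightedVolume (Ioo α β) w) ∧
      Tendsto (fun k => eLpNorm (d k - v') 1 (weightedVolume (Ioo α β) w)) atTop (𝓝 0) ∧
      ∀ x ∈ Ioo α β, ∀ y ∈ Ioo α β, IntervalIntegrable v' volume x y ∧
        Tendsto (fun k => ∫ t in x..y, d k t) atTop (𝓝 (∫ t in x..y, v' t)) := by
  have hdm := fun k => aestronglyMeasurable_of_integrableOn_Icc (hd_int k)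
  obtain ⟨v', hv'mem, hv'lim⟩ := exists_tendsto_eLpNorm_sub_of_cauchy
    (fun k => ⟨(hdm k).mono_ac weightedVolume_ac, hdfin k⟩) hd
  refine ⟨v', hv'mem, hv'lim, fun x hx y hy => ?_⟩
  have hc : α < min x y := lt_min hx.1 hy.1
  have hd' : max x y < β := max_lt hx.2 hy.2
  obtain ⟨δ, hδ, hle⟩ := hw_low _ _ hc min_le_max hd'
  have hloc : Tendsto (fun k => ∫⁻ t in uIcc x y, ‖d k t - v' t‖ₑ) atTop (𝓝 0) :=
    tendsto_setLIntegral_enorm_of_tendsto_eLpNorm (Icc_subset_Ioo hc hd') hwmeas hδ hle hv'lim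
  obtain ⟨k, hk⟩ := (hloc.eventually (gt_mem_nhds ENNReal.zero_lt_top)).exists
  have hdiff : IntegrableOn (d k - v') (uIcc x y) :=
    ⟨((hdm k).sub (hv'mem.1.mono_ac (ac_weightedVolume hwmeas hw_pos))).mono_measure
      (Measure.restrict_mono (Icc_subset_Ioo hc hd') le_rfl), hk⟩
  have hv'int : IntervalIntegrable v' volume x y := by
    simpa using ((hd_int k _ _ hc hd').sub hdiff).intervalIntegrable
  refine ⟨hv'int, intervalIntegral.tendsto_integral_of_tendsto_lintegral_enorm
    (fun k => (hd_int k _ _ hc hd').intervalIntegrable) hv'int ?_⟩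
  exact tendsto_of_tendsto_of_tendsto_of_le_of_le tendsto_const_nhds hloc (fun _ => zero_le)
    fun k => lintegral_mono_set uIoc_subset_uIcc

theorem exists_limit_of_ae_pos {α β : ℝ} {w W : ℝ → ℝ} (hwmeas : Measurable w)
    (hWmeas : Measurable W) (hw_pos : ∀ᵐ x ∂volume.restrict (Ioo α β), 0 < w x)
    (hw_low : ∀ c d, α < c → c ≤ d → d < β →
      ∃ δ > 0, ∀ᵐ x ∂volume.restrict (Icc c d), δ ≤ w x)
    {c₀ d₀ ρ : ℝ} (hc₀ : α < c₀) (hcd₀ : c₀ < d₀) (hd₀ : d₀ < β) (hρ : 0 < ρ)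
    (hW_low : ∀ x ∈ Icc c₀ d₀, ρ ≤ W x)
    {u d : ℕ → ℝ → ℝ} (hAC : ∀ k, LocACOn (u k) (d k) α β)
    (hufin : ∀ k, eLpNorm (u k) 1 (weightedVolume (Ioo α β) W) < ⊤)
    (hdfin : ∀ k, eLpNorm (d k) 1 (weightedVolume (Ioo α β) w) < ⊤)
    (hu : Tendsto (fun n : ℕ × ℕ => eLpNorm (u n.1 - u n.2) 1 (weightedVolume (Ioo α β) W))
      atTop (𝓝 0))
    (hd : Tendsto (fun n : ℕ × ℕ => eLpNorm (d n.1 - d n.2) 1 (weightedVolume (Ioo α β) w))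
      atTop (𝓝 0)) :
    ∃ v v', LocACOn v v' α β ∧ MemLp v 1 (weightedVolume (Ioo α β) W) ∧
      MemLp v' 1 (weightedVolume (Ioo α β) w) ∧
      Tendsto (fun k => eLpNorm (u k - v) 1 (weightedVolume (Ioo α β) W)) atTop (𝓝 0) ∧
      Tendsto (fun k => eLpNorm (d k - v') 1 (weightedVolume (Ioo α β) w)) atTop (𝓝 0) := by
  have hc₀I : c₀ ∈ Ioo α β := ⟨hc₀, hcd₀.trans hd₀⟩
  obtain ⟨v', hv'mem, hv'lim, hprim⟩ := exists_tendsto_eLpNorm_deriv hwmeas hw_pos hw_low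
    (fun k _ _ hc hd' => (hAC k).integrableOn_Icc hc hd') hdfin hd
  obtain ⟨L, hL⟩ : ∃ L, Tendsto (fun k => u k c₀) atTop (𝓝 L) := by
    obtain ⟨δ, hδ, hle⟩ := hw_low c₀ d₀ hc₀ hcd₀.le hd₀
    refine cauchySeq_tendsto_of_complete <| cauchySeq_apply_of_tendsto_lintegral
      (fun k => hAC k c₀ d₀ hc₀ hcd₀.le hd₀) hcd₀ ⟨le_rfl, hcd₀.le⟩ ?_ ?_
    · exact tendsto_setLIntegral_enorm_of_tendsto_eLpNorm (Icc_subset_Ioo hc₀ hd₀) hWmeas hρ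
        (ae_restrict_of_forall_mem measurableSet_Icc hW_low) hu
    · exact tendsto_setLIntegral_enorm_of_tendsto_eLpNorm (Icc_subset_Ioo hc₀ hd₀) hwmeas hδ hle hd
  set v : ℝ → ℝ := fun x => L + ∫ t in c₀..x, v' t
  have hvAC : LocACOn v v' α β :=
    locACOn_primitive (fun x hx y hy => (hprim x hx y hy).1) hc₀I L
  have hmeas : ∀ {f f' : ℝ → ℝ}, LocACOn f f' α β →
      AEStronglyMeasurable f (weightedVolume (Ioo α β) W) := fun hf =>
    (hf.continuousOn.aestronglyMeasurable measurableSet_Ioo).mono_ac weightedVolume_ac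
  have hulim : Tendsto (fun k => eLpNorm (u k - v) 1 (weightedVolume (Ioo α β) W))
      atTop (𝓝 0) := by
    refine tendsto_eLpNorm_sub_of_cauchy_of_ae_tendsto (fun k => hmeas (hAC k)) hu ?_
    refine weightedVolume_ac.ae_le (ae_restrict_of_forall_mem measurableSet_Ioo fun x hx => ?_)
    exact (hL.add (hprim c₀ hc₀I x hx).2).congr fun k =>
      ((hAC k).eq_add_integral hc₀I hx).symm
  obtain ⟨k, hk⟩ := (hulim.eventually (gt_mem_nhds ENNReal.zero_lt_top)).exists
  refine ⟨v, v', hvAC, ⟨hmeas hvAC, ?_⟩, hv'mem, hulim, hv'lim⟩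
  calc _ = eLpNorm (u k - (u k - v)) 1 (weightedVolume (Ioo α β) W) := by rw [sub_sub_cancel]
    _ ≤ _ := eLpNorm_sub_le (hmeas (hAC k)) ((hmeas (hAC k)).sub (hmeas hvAC)) le_rfl
    _ < ⊤ := ENNReal.add_lt_top.2 ⟨hufin k, hk⟩

noncomputable def domNorm (s : Set ℝ) (W w u u' : ℝ → ℝ) : ℝ≥0∞ :=
  (∫⁻ x in s, ENNReal.ofReal (|u x| * W x)) + ∫⁻ x in s, ENNReal.ofReal (|u' x| * w x)

section DomNorm

variable {s : Set ℝ} {W W' w u u' v v' : ℝ → ℝ}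

theorem domNorm_eq_eLpNorm (hW : Measurable W) (hw : Measurable w) :
    domNorm s W w u u' = eLpNorm u 1 (weightedVolume s W) + eLpNorm u' 1 (weightedVolume s w) := by
  rw [domNorm, setLIntegral_ofReal_abs_mul hW, setLIntegral_ofReal_abs_mul hw]

theorem domNorm_congr_weight (hs : MeasurableSet s) (h : EqOn W W' s) :
    domNorm s W w = domNorm s W' w := by
  ext u u'
  rw [domNorm, domNorm, setLIntegral_congr_fun hs fun x hx => (by rw [h hx])]

theorem domNorm_congr (hs : MeasurableSet s) (hu : EqOn u v s) (hu' : EqOn u' v' s) :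
    domNorm s W w u u' = domNorm s W w v v' := by
  rw [domNorm, domNorm]
  congr 1 <;> refine setLIntegral_congr_fun hs fun x hx => ?_
  · rw [hu hx]
  · rw [hu' hx]

theorem domNorm_mono_set {t : Set ℝ} (h : s ⊆ t) : domNorm s W w u u' ≤ domNorm t W w u u' :=
  add_le_add (lintegral_mono_set h) (lintegral_mono_set h)

theorem domNorm_iUnion {ι : Type*} [Fintype ι] {S : ι → Set ℝ} (hS : ∀ i, MeasurableSet (S i))
    (hdisj : Pairwise fun i j => Disjoint (S i) (S j)) :
    domNorm (⋃ i, S i) W w u u' = ∑ i, domNorm (S i) W w u u' := by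
  simp only [domNorm, Finset.sum_add_distrib, Measure.restrict_iUnion hdisj hS,
    lintegral_sum_measure, tsum_fintype]

end DomNorm

theorem domNorm_hatW_eq_zero_of_ae_nonpos {α β : ℝ} {w : ℝ → ℝ}
    (hw : ∀ᵐ x ∂volume.restrict (Ioo α β), w x ≤ 0) (f f' : ℝ → ℝ) :
    domNorm (Ioo α β) (hatW w α β) w f f' = 0 := by
  rw [domNorm, add_eq_zero]
  constructor
  · refine (setLIntegral_congr_fun measurableSet_Ioo fun x hx => ?_).trans lintegral_zero
    rw [hatW_eq_zero_of_ae_nonpos hw hx, mul_zero, ENNReal.ofReal_zero]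
  · refine (lintegral_congr_ae ?_).trans lintegral_zero
    filter_upwards [hw] with x hx
    exact ENNReal.ofReal_eq_zero.2 (mul_nonpos_of_nonneg_of_nonpos (abs_nonneg _) hx)

theorem exists_tendsto_domNorm_Ioo_of_pos {α β : ℝ} (hαβ : α < β) {w wt : ℝ → ℝ}
    (hwmeas : Measurable w)
    (hwinv : ∀ c d : ℝ, α < c → c ≤ d → d < β → essSupInv w (Icc c d) < ⊤)
    (hwt : ∀ᵐ x ∂volume.restrict (Ioo α β), wt x = w x) (hwt_cont : ContinuousOn wt (Ioo α β))
    (hwt_pos : ∀ x ∈ Ioo α β, 0 < wt x) {u d : ℕ → ℝ → ℝ}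
    (hAC : ∀ k, LocACOn (u k) (d k) α β)
    (hfin : ∀ k, domNorm (Ioo α β) (hatW w α β) w (u k) (d k) < ⊤)
    (hcau : Tendsto (fun n : ℕ × ℕ =>
      domNorm (Ioo α β) (hatW w α β) w (u n.1 - u n.2) (d n.1 - d n.2)) atTop (𝓝 0)) :
    ∃ v v', LocACOn v v' α β ∧ domNorm (Ioo α β) (hatW w α β) w v v' < ⊤ ∧
      Tendsto (fun k => domNorm (Ioo α β) (hatW w α β) w (u k - v) (d k - v')) atTop (𝓝 0) := by
  simp only [domNorm_eq_eLpNorm (hatW_measurable w α β) hwmeas] at hfin hcau ⊢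
  have hw_pos : ∀ᵐ x ∂volume.restrict (Ioo α β), 0 < w x := by
    filter_upwards [hwt, ae_restrict_mem measurableSet_Ioo] with x h1 h2
    exact h1 ▸ hwt_pos x h2
  have hw_low : ∀ c d, α < c → c ≤ d → d < β →
      ∃ δ > 0, ∀ᵐ x ∂volume.restrict (Icc c d), δ ≤ w x := fun c d hc _ hd =>
    exists_pos_ae_le_of_continuousOn isCompact_Icc (hwt_cont.mono (Icc_subset_Ioo hc hd))
      (fun x hx => hwt_pos x (Icc_subset_Ioo hc hd hx))
      (ae_restrict_of_ae_restrict_of_subset (Icc_subset_Ioo hc hd) hwt)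
  obtain ⟨ρ, hρ, hW_low⟩ := exists_pos_le_hatW hαβ hwinv hw_pos
  obtain ⟨v, v', hvAC, hv, hv', hulim, hdlim⟩ := exists_limit_of_ae_pos hwmeas
    (hatW_measurable w α β) hw_pos hw_low (by linarith) (by linarith) (by linarith) hρ hW_low hAC
    (fun k => le_self_add.trans_lt (hfin k)) (fun k => le_add_self.trans_lt (hfin k))
    (tendsto_of_tendsto_of_tendsto_of_le_of_le tendsto_const_nhds hcau (fun _ => zero_le)
      fun _ => le_self_add)
    (tendsto_of_tendsto_of_tendsto_of_le_of_le tendsto_const_nhds hcau (fun _ => zero_le)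
      fun _ => le_add_self)
  refine ⟨v, v', hvAC, ENNReal.add_lt_top.2 ⟨hv.2, hv'.2⟩, ?_⟩
  simpa using hulim.add hdlim

theorem exists_tendsto_domNorm_Ioo {α β : ℝ} {w wt wd W : ℝ → ℝ} (hwmeas : Measurable w)
    (hwinv : ∀ c d : ℝ, α < c → c ≤ d → d < β → essSupInv w (Icc c d) < ⊤)
    (hwt : ∀ᵐ x ∂volume.restrict (Ioo α β), wt x = w x) (hwAC : LocACOn wt wd α β)
    (hW : EqOn W (hatW w α β) (Ioo α β)) {u d : ℕ → ℝ → ℝ}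
    (hAC : ∀ k, LocACOn (u k) (d k) α β) (hfin : ∀ k, domNorm (Ioo α β) W w (u k) (d k) < ⊤)
    (hcau : Tendsto (fun n : ℕ × ℕ => domNorm (Ioo α β) W w (u n.1 - u n.2) (d n.1 - d n.2))
      atTop (𝓝 0)) :
    ∃ v v', LocACOn v v' α β ∧ domNorm (Ioo α β) W w v v' < ⊤ ∧
      Tendsto (fun k => domNorm (Ioo α β) W w (u k - v) (d k - v')) atTop (𝓝 0) := by
  rw [domNorm_congr_weight measurableSet_Ioo hW] at hfin hcau ⊢
  -- `wt` is positive everywhere on `(α, β)` as soon as it is positive somewhere.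
  by_cases hpos : ∃ x₀ ∈ Ioo α β, 0 < wt x₀
  · obtain ⟨x₀, hx₀, h₀⟩ := hpos
    exact exists_tendsto_domNorm_Ioo_of_pos (hx₀.1.trans hx₀.2) hwmeas hwinv hwt
      hwAC.continuousOn (hwAC.forall_pos_of_pos hwinv hwt hx₀ h₀) hAC hfin hcau
  · simp only [not_exists, not_and, not_lt] at hpos
    have hzero := domNorm_hatW_eq_zero_of_ae_nonpos (α := α) (β := β) (w := w) <| by
      filter_upwards [hwt, ae_restrict_mem measurableSet_Ioo] with x h1 h2
      exact h1 ▸ hpos x h2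
    refine ⟨0, 0, fun c d _ _ _ => ⟨intervalIntegrable_const, fun x _ => by simp⟩, ?_, ?_⟩ <;>
      simp [hzero]

theorem exists_eqOn_of_pairwise_disjoint {ι X Y : Type*} [Nonempty Y] {S : ι → Set X}
    (hdisj : Pairwise fun i j => Disjoint (S i) (S j)) (f : ι → X → Y) :
    ∃ g : X → Y, ∀ i, EqOn g (f i) (S i) := by
  classical
  refine ⟨fun x => if h : ∃ i, x ∈ S i then f h.choose x else Classical.arbitrary Y,
    fun i x hx => ?_⟩
  have h : ∃ i, x ∈ S i := ⟨i, hx⟩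
  have hi : h.choose = i := by
    by_contra hne
    exact disjoint_left.1 (hdisj hne) h.choose_spec hx
  simp only [dif_pos h, hi]

theorem ENNReal.tendsto_atTop_zero_of_forall_le_ofReal {β : Type*} [SemilatticeSup β] [Nonempty β]
    {f : β → ℝ≥0∞} (h : ∀ ε : ℝ, 0 < ε → ∃ N, ∀ n, N ≤ n → f n ≤ ENNReal.ofReal ε) :
    Tendsto f atTop (𝓝 0) := by
  refine ENNReal.tendsto_atTop_zero.2 fun ε hε => ?_
  obtain ⟨r, -, hr, hrε⟩ := ENNReal.lt_iff_exists_real_btwn.1 hε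
  obtain ⟨N, hN⟩ := h r (ENNReal.ofReal_pos.1 hr)
  exact ⟨N, fun n hn => (hN n hn).trans hrε.le⟩

theorem exists_tendsto_domNorm_iUnion {ι : Type*} [Fintype ι] {A B : ι → ℝ}
    (hAB : ∀ i, A i < B i)
    (hdisj : Pairwise fun i j => Disjoint (Ioo (A i) (B i)) (Ioo (A j) (B j)))
    {w wt wd : ℝ → ℝ} (hwmeas : Measurable w)
    (hwinv : ∀ i, ∀ c d : ℝ, A i < c → c ≤ d → d < B i → essSupInv w (Icc c d) < ⊤)
    (hwt : ∀ᵐ x ∂volume, x ∈ ⋃ i, Ioo (A i) (B i) → wt x = w x)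
    (hwAC : ∀ i, LocACOn wt wd (A i) (B i)) {u d : ℕ → ℝ → ℝ}
    (hAC : ∀ k i, LocACOn (u k) (d k) (A i) (B i))
    (hfin : ∀ k, domNorm (⋃ i, Ioo (A i) (B i)) (hatWFam w A B) w (u k) (d k) < ⊤)
    (hcau : Tendsto (fun n : ℕ × ℕ =>
      domNorm (⋃ i, Ioo (A i) (B i)) (hatWFam w A B) w (u n.1 - u n.2) (d n.1 - d n.2))
      atTop (𝓝 0)) :
    ∃ v v', (∀ i, LocACOn v v' (A i) (B i)) ∧
      domNorm (⋃ i, Ioo (A i) (B i)) (hatWFam w A B) w v v' < ⊤ ∧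
      Tendsto (fun k => domNorm (⋃ i, Ioo (A i) (B i)) (hatWFam w A B) w (u k - v) (d k - v'))
        atTop (𝓝 0) := by
  have hsub : ∀ i, Ioo (A i) (B i) ⊆ ⋃ j, Ioo (A j) (B j) :=
    subset_iUnion fun j => Ioo (A j) (B j)
  have hpiece : ∀ i, ∃ v v', LocACOn v v' (A i) (B i) ∧
      domNorm (Ioo (A i) (B i)) (hatWFam w A B) w v v' < ⊤ ∧
      Tendsto (fun k => domNorm (Ioo (A i) (B i)) (hatWFam w A B) w (u k - v) (d k - v'))
        atTop (𝓝 0) := fun i =>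
    exists_tendsto_domNorm_Ioo hwmeas (hwinv i)
      (by filter_upwards [ae_restrict_of_ae hwt, ae_restrict_mem measurableSet_Ioo] with x h1 h2
          using h1 (hsub i h2))
      (hwAC i) (fun x hx => hatWFam_eq_hatW hAB hdisj hx) (fun k => hAC k i)
      (fun k => (domNorm_mono_set (hsub i)).trans_lt (hfin k))
      (tendsto_of_tendsto_of_tendsto_of_le_of_le tendsto_const_nhds hcau (fun _ => zero_le)
        fun _ => domNorm_mono_set (hsub i))
  choose v v' hvAC hvfin hvlim using hpiece
  obtain ⟨V, hV⟩ := exists_eqOn_of_pairwise_disjoint hdisj v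
  obtain ⟨V', hV'⟩ := exists_eqOn_of_pairwise_disjoint hdisj v'
  have hsplit := fun f f' => domNorm_iUnion (W := hatWFam w A B) (w := w) (u := f) (u' := f')
    (fun i => measurableSet_Ioo) hdisj
  refine ⟨V, V', fun i => (hvAC i).congr (hV i).symm (hV' i).symm, ?_, ?_⟩
  · rw [hsplit]
    refine ENNReal.sum_lt_top.2 fun i _ => ?_
    rw [domNorm_congr measurableSet_Ioo (hV i) (hV' i)]
    exact hvfin i
  · simp only [hsplit]
    rw [← Finset.sum_const_zero]
    refine tendsto_finsetSum _ fun i _ => (hvlim i).congr fun k => ?_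
    refine domNorm_congr measurableSet_Ioo (fun x hx => ?_) (fun x hx => ?_)
    · simp only [Pi.sub_apply, hV i hx]
    · simp only [Pi.sub_apply, hV' i hx]

theorem stmt_18_general (N : ℕ)
    (A B : Fin N → ℝ) (hAB : ∀ i, A i < B i)
    (hdisj : Pairwise fun i j => Disjoint (Set.Ioo (A i) (B i)) (Set.Ioo (A j) (B j)))
    (w : ℝ → ℝ) (hwmeas : Measurable w)
    (hwinv : ∀ i, ∀ c d : ℝ, A i < c → c ≤ d → d < B i → essSupInv w (Set.Icc c d) < ⊤)
    (wt wd : ℝ → ℝ)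
    (hwt : ∀ᵐ x ∂(MeasureTheory.volume : MeasureTheory.Measure ℝ),
      x ∈ (⋃ i, Set.Ioo (A i) (B i)) → wt x = w x)
    (hwAC : ∀ i, LocACOn wt wd (A i) (B i))
    (u d : ℕ → ℝ → ℝ)
    (hAC : ∀ k i, LocACOn (u k) (d k) (A i) (B i))
    (hfin : ∀ k,
      (∫⁻ x in ⋃ i, Set.Ioo (A i) (B i),
        ENNReal.ofReal (|u k x| * hatWFam w A B x)) +
      (∫⁻ x in ⋃ i, Set.Ioo (A i) (B i),
        ENNReal.ofReal (|d k x| * w x)) < ⊤)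
    (hcauchy : ∀ ε : ℝ, 0 < ε → ∃ M : ℕ, ∀ k l : ℕ, M ≤ k → M ≤ l →
      (∫⁻ x in ⋃ i, Set.Ioo (A i) (B i),
        ENNReal.ofReal (|u k x - u l x| * hatWFam w A B x)) +
      (∫⁻ x in ⋃ i, Set.Ioo (A i) (B i),
        ENNReal.ofReal (|d k x - d l x| * w x)) ≤ ENNReal.ofReal ε) :
    ∃ v v' : ℝ → ℝ,
      (∀ i, LocACOn v v' (A i) (B i)) ∧
      (∫⁻ x in ⋃ i, Set.Ioo (A i) (B i),
        ENNReal.ofReal (|v x| * hatWFam w A B x)) +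
      (∫⁻ x in ⋃ i, Set.Ioo (A i) (B i),
        ENNReal.ofReal (|v' x| * w x)) < ⊤ ∧
      Filter.Tendsto (fun k =>
        (∫⁻ x in ⋃ i, Set.Ioo (A i) (B i),
          ENNReal.ofReal (|u k x - v x| * hatWFam w A B x)) +
        (∫⁻ x in ⋃ i, Set.Ioo (A i) (B i),
          ENNReal.ofReal (|d k x - v' x| * w x))) Filter.atTop (nhds 0) := by
  exact exists_tendsto_domNorm_iUnion hAB hdisj hwmeas hwinv hwt hwAC hAC hfin <|
    ENNReal.tendsto_atTop_zero_of_forall_le_ofReal fun ε hε =>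
      let ⟨M, hM⟩ := hcauchy ε hε
      ⟨(M, M), fun n hn => hM n.1 n.2 hn.1 hn.2⟩

/-- Completeness of `Dom_w`: every Cauchy sequence for the norm
`‖u‖ = ∫_I |u| ŵ + ∫_I |u'| w` consisting of functions locally absolutely continuous
on each `(A i, B i)` with finite norm converges, in this norm, to a function of the
same kind. -/
theorem stmt_18 (a b : ℝ) (hab : a < b) (N : ℕ) (hN : 1 ≤ N)
    (A B : Fin N → ℝ) (hAB : ∀ i, A i < B i)
    (hsub : ∀ i, Set.Ioo (A i) (B i) ⊆ Set.Ioo a b)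
    (hdisj : Pairwise fun i j => Disjoint (Set.Ioo (A i) (B i)) (Set.Ioo (A j) (B j)))
    (w : ℝ → ℝ) (hw0 : ∀ x, 0 ≤ w x) (hwmeas : Measurable w)
    (hwloc : MeasureTheory.LocallyIntegrableOn w (Set.Ioo a b))
    (hwinv : ∀ i, ∀ c d : ℝ, A i < c → c ≤ d → d < B i → essSupInv w (Set.Icc c d) < ⊤)
    (wt wd : ℝ → ℝ)
    (hwt : ∀ᵐ x ∂(MeasureTheory.volume : MeasureTheory.Measure ℝ),
      x ∈ (⋃ i, Set.Ioo (A i) (B i)) → wt x = w x)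
    (hwAC : ∀ i, LocACOn wt wd (A i) (B i))
    (u d : ℕ → ℝ → ℝ)
    (hAC : ∀ k i, LocACOn (u k) (d k) (A i) (B i))
    (hfin : ∀ k,
      (∫⁻ x in ⋃ i, Set.Ioo (A i) (B i),
        ENNReal.ofReal (|u k x| * hatWFam w A B x)) +
      (∫⁻ x in ⋃ i, Set.Ioo (A i) (B i),
        ENNReal.ofReal (|d k x| * w x)) < ⊤)
    (hcauchy : ∀ ε : ℝ, 0 < ε → ∃ M : ℕ, ∀ k l : ℕ, M ≤ k → M ≤ l →
      (∫⁻ x in ⋃ i, Set.Ioo (A i) (B i),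
        ENNReal.ofReal (|u k x - u l x| * hatWFam w A B x)) +
      (∫⁻ x in ⋃ i, Set.Ioo (A i) (B i),
        ENNReal.ofReal (|d k x - d l x| * w x)) ≤ ENNReal.ofReal ε) :
    ∃ v v' : ℝ → ℝ,
      (∀ i, LocACOn v v' (A i) (B i)) ∧
      (∫⁻ x in ⋃ i, Set.Ioo (A i) (B i),
        ENNReal.ofReal (|v x| * hatWFam w A B x)) +
      (∫⁻ x in ⋃ i, Set.Ioo (A i) (B i),
        ENNReal.ofReal (|v' x| * w x)) < ⊤ ∧
      Filter.Tendsto (fun k =>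
        (∫⁻ x in ⋃ i, Set.Ioo (A i) (B i),
          ENNReal.ofReal (|u k x - v x| * hatWFam w A B x)) +
        (∫⁻ x in ⋃ i, Set.Ioo (A i) (B i),
          ENNReal.ofReal (|d k x - v' x| * w x))) Filter.atTop (nhds 0) :=
  stmt_18_general N A B hAB hdisj w hwmeas hwinv wt wd hwt hwAC u d hAC hfin hcauchy
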